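/- arXiv:2508.17951 — 3 statements merged into one kernel-verified Lean document; each statement's English description precedes it below -/
import Mathlib

section
/- In a skew brace B, the identity (a + b) ∗ c = a ∗ (λ_a⁻¹(b) ∗ c) + λ_a⁻¹(b) ∗ c + a ∗ c holds for all a, b, c ∈ B. -/
/-- A skew (left) brace: a type with an additive group structure `(B,+)` and a
multiplicative group structure `(B,∘)` (written `*`), satisfying the skew left
distributive law `a ∘ (b + c) = a ∘ b − a + a ∘ c`.  Addition is not assumed
commutative. -/
class SkewBrace (B : Type*) extends AddGroup B, Group B where
  skew_mul_add : ∀ a b c : B, a * (b + c) = a * b + -a + a * c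

namespace SkewBrace

variable {B : Type*} [SkewBrace B]

/-- `lam a x = −a + a ∘ x`, the lambda map of a skew brace. -/
def lam (a x : B) : B := -a + a * x

/-- The star operation `a ∗ b = λ_a(b) − b = −a + a ∘ b − b`. -/
def sstar (a b : B) : B := -a + a * b + -b

/-- A sub-skew-brace: a subset closed under both group operations and inverses. -/
def IsSubSkewBrace (C : Set B) : Prop :=
  (0 : B) ∈ C ∧ (∀ a ∈ C, ∀ b ∈ C, a + b ∈ C) ∧ (∀ a ∈ C, -a ∈ C) ∧
    (∀ a ∈ C, ∀ b ∈ C, a * b ∈ C) ∧ (∀ a ∈ C, a⁻¹ ∈ C)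

/-- A subgroup of the additive group `(B,+)`, as a subset. -/
def IsAddSubgroup (S : Set B) : Prop :=
  (0 : B) ∈ S ∧ (∀ a ∈ S, ∀ b ∈ S, a + b ∈ S) ∧ (∀ a ∈ S, -a ∈ S)

/-- A subgroup of the multiplicative group `(B,∘)`, as a subset. -/
def IsMulSubgroup (S : Set B) : Prop :=
  (1 : B) ∈ S ∧ (∀ a ∈ S, ∀ b ∈ S, a * b ∈ S) ∧ (∀ a ∈ S, a⁻¹ ∈ S)

/-- A strong left ideal: an additively normal, `λ`-invariant additive subgroup. -/
def IsStrongLeftIdeal (J : Set B) : Prop :=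
  IsAddSubgroup J ∧ (∀ b : B, ∀ j ∈ J, b + j + -b ∈ J) ∧ (∀ b : B, ∀ j ∈ J, lam b j ∈ J)

/-- An ideal: a sub-skew-brace which is additively normal, `λ`-invariant and
multiplicatively normal. -/
def IsIdeal (I : Set B) : Prop :=
  IsSubSkewBrace I ∧ (∀ b : B, ∀ a ∈ I, b + a + -b ∈ I) ∧
    (∀ b : B, ∀ a ∈ I, lam b a ∈ I) ∧ (∀ b : B, ∀ a ∈ I, b * a * b⁻¹ ∈ I)

/-- Multiplication of the design group `G(B) = (B,+) ⋊_λ (B,∘)`. -/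
def gmul (p q : B × B) : B × B := (p.1 + lam p.2 q.1, p.2 * q.2)

/-- Inversion in the design group `G(B)`. -/
def ginv (p : B × B) : B × B := (-(lam p.2⁻¹ p.1), p.2⁻¹)

/-- For a subset `I ⊆ B`, the subset `G(I) = I × I` of the design group. -/
def designSet (I : Set B) : Set (B × B) := {p | p.1 ∈ I ∧ p.2 ∈ I}

lemma mul_zero' (a : B) : a * (0 : B) = a := by
  have h := skew_mul_add a 0 0
  rw [add_zero] at h
  have : (0:B) = -a + a * 0 := by
    have := h.symm
    calc (0:B) = -(a*0) + (a*0) := by rw [neg_add_cancel]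
    _ = -(a*0) + (a*0 + -a + a*0) := by rw [← h]
    _ = -a + a*0 := by rw [← add_assoc, ← add_assoc, neg_add_cancel, zero_add]
  have h2 : a + (0:B) = a + (-a + a*0) := by rw [← this]
  rw [← add_assoc, add_neg_cancel, zero_add, add_zero] at h2
  exact h2.symm

lemma one_eq_zero' : (1 : B) = 0 := by
  have := mul_zero' (1 : B)
  rw [one_mul] at this
  exact this.symm

lemma mul_neg' (a x : B) : a * (-x) = a + -(a * x) + a := by
  have h := skew_mul_add a x (-x)
  rw [add_neg_cancel, mul_zero'] at h
  -- h : a = a*x + -a + a*(-x)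
  have h2 : a * (-x) = -(a * x + -a) + a := eq_neg_add_of_add_eq h.symm
  rw [h2, neg_add_rev, neg_neg]

lemma mul_lam_inv (a b : B) : a * lam a⁻¹ b = a + b := by
  unfold lam
  rw [skew_mul_add, mul_neg', mul_inv_cancel, one_eq_zero', neg_zero, add_zero,
    ← mul_assoc, mul_inv_cancel, one_mul]
  rw [add_assoc a a (-a), add_neg_cancel, add_zero]

lemma mul_sstar (a x c : B) :
    sstar (a * x) c = sstar a (sstar x c) + sstar x c + sstar a c := by
  unfold sstar
  have h1 : x * c = x + (-x + x * c) := (add_neg_cancel_left x (x * c)).symm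
  have e1 : a * (x * c) = a * x + -a + a * (-x + x * c) := by
    conv_lhs => rw [h1]
    rw [skew_mul_add]
  have e2 : a * (-x + x * c + -c) = a * (-x + x * c) + -a + (a + -(a * c) + a) := by
    rw [skew_mul_add, mul_neg']
  rw [mul_assoc, e1, e2]
  generalize a * (-x + x * c) = P
  generalize a * x = Q
  generalize a * c = R
  generalize x * c = S
  simp [add_assoc, neg_add_rev]

/-- The identity `(a + b) ∗ c = a ∗ (λ_{a⁻¹}(b) ∗ c) + λ_{a⁻¹}(b) ∗ c + a ∗ c`. -/
theorem add_sstar (a b c : B) :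
    sstar (a + b) c = sstar a (sstar (lam a⁻¹ b) c) + sstar (lam a⁻¹ b) c + sstar a c := by
  rw [← mul_lam_inv a b, mul_sstar]


end SkewBrace
end

section
/- Let B be a skew brace, H an additive subgroup, G an additive subgroup whose elements additively normalize H, and c ∈ B. Then Fix^r_G(c/H) = {x ∈ G : λ_c(x) ∈ x + H} is a subgroup of (G,+). -/
namespace SkewBrace

variable {B : Type*} [SkewBrace B]

/-- `Fix^r_G(c/H) = {x ∈ G : λ_c(x) ∈ x + H}`. -/
def fixrSet (G H : Set B) (c : B) : Set B :=
  {x : B | x ∈ G ∧ ∃ h ∈ H, lam c x = x + h}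

lemma lam_zero (c : B) : lam c 0 = 0 := by
  have h := skew_mul_add c 0 0
  rw [add_zero] at h
  have : (0 : B) = -c + c * 0 := by
    have := congrArg (fun t => -(c * 0) + t) h
    simp [add_assoc] at this
    simpa [add_assoc] using this
  simpa [lam] using this.symm

lemma lam_add (c x y : B) : lam c (x + y) = lam c x + lam c y := by
  simp only [lam, skew_mul_add]
  simp [add_assoc]

lemma lam_neg (c x : B) : lam c (-x) = -(lam c x) := by
  have h : lam c (-x) + lam c x = 0 := by
    rw [← lam_add, neg_add_cancel, lam_zero]
  exact eq_neg_of_add_eq_zero_left h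

/-- If `H` is an additive subgroup, `G` an additive subgroup whose elements
additively normalize `H`, then `Fix^r_G(c/H)` is a subgroup of `(G,+)`. -/
theorem fixrSet_add_subgroup (G H : Set B) (hG : IsAddSubgroup G)
    (hH : IsAddSubgroup H)
    (hnorm : ∀ x ∈ G, {y : B | ∃ h ∈ H, y = x + h + -x} = H) (c : B) :
    IsAddSubgroup (fixrSet G H c) ∧ fixrSet G H c ⊆ G := by
  obtain ⟨hG0, hGadd, hGneg⟩ := hG
  obtain ⟨hH0, hHadd, hHneg⟩ := hH
  have hconj : ∀ x ∈ G, ∀ h ∈ H, x + h + -x ∈ H := by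
    intro x hx h hh
    rw [← hnorm x hx]
    exact ⟨h, hh, rfl⟩
  refine ⟨⟨⟨hG0, 0, hH0, by rw [lam_zero, add_zero]⟩, ?_, ?_⟩, fun x hx => hx.1⟩
  · rintro x ⟨hxG, h1, hh1, he1⟩ y ⟨hyG, h2, hh2, he2⟩
    refine ⟨hGadd x hxG y hyG, -y + h1 + y + h2, hHadd _ ?_ _ hh2, ?_⟩
    · have := hconj (-y) (hGneg y hyG) h1 hh1
      simpa [add_assoc] using this
    · rw [lam_add, he1, he2]
      simp [add_assoc, neg_add_cancel_left, neg_add_rev]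
  · rintro x ⟨hxG, h, hh, he⟩
    refine ⟨hGneg x hxG, x + -h + -x, hconj x hxG _ (hHneg h hh), ?_⟩
    rw [lam_neg, he]
    simp [add_assoc, neg_add_cancel_left, neg_add_rev]


end SkewBrace
end

section
/- Let B be a skew brace that is locally annihilator nilpotent of class ≤ k (every finitely generated sub-skew-brace C satisfies Γ_k(C) = {0}). Then B is annihilator nilpotent of class ≤ k, i.e., Γ_k(B) = {0}. -/
namespace SkewBrace

variable {B : Type*} [SkewBrace B]

/-- The sub-skew-brace generated by a subset `S`. -/
def braceClosure (S : Set B) : Set B := ⋂₀ {D : Set B | IsSubSkewBrace D ∧ S ⊆ D}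

/-- The lower annihilator series `Γ_n(C)` of a sub-skew-brace `C`:
`Γ_0(C) = C` and `Γ_{n+1}(C)` is the additive subgroup generated by
`Γ_n(C) ∗ C`, `[C, Γ_n(C)]_∘` and `[C, Γ_n(C)]_+`. -/
def gammaSeq (C : Set B) : ℕ → Set B
  | 0 => C
  | n + 1 =>
    (AddSubgroup.closure
      ({x : B | ∃ a ∈ gammaSeq C n, ∃ b ∈ C, x = sstar a b} ∪
       {x : B | ∃ b ∈ C, ∃ a ∈ gammaSeq C n, x = b * a * b⁻¹ * a⁻¹} ∪
       {x : B | ∃ b ∈ C, ∃ a ∈ gammaSeq C n, x = b + a + -b + -a}) : Set B)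

lemma gammaSeq_mono {C D : Set B} (h : C ⊆ D) : ∀ n, gammaSeq C n ⊆ gammaSeq D n := by
  intro n
  induction n with
  | zero => exact h
  | succ n ih =>
    refine SetLike.coe_subset_coe.mpr (AddSubgroup.closure_mono ?_)
    rintro x ((⟨a, ha, b, hb, rfl⟩ | ⟨b, hb, a, ha, rfl⟩) | ⟨b, hb, a, ha, rfl⟩)
    · exact Or.inl (Or.inl ⟨a, ih ha, b, h hb, rfl⟩)
    · exact Or.inl (Or.inr ⟨b, h hb, a, ih ha, rfl⟩)
    · exact Or.inr ⟨b, h hb, a, ih ha, rfl⟩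

lemma subset_braceClosure (S : Set B) : S ⊆ braceClosure S := by
  intro x hx
  rw [braceClosure, Set.mem_sInter]
  exact fun D hD => hD.2 hx

lemma braceClosure_mono {S T : Set B} (h : S ⊆ T) : braceClosure S ⊆ braceClosure T := by
  intro x hx
  rw [braceClosure, Set.mem_sInter] at *
  exact fun D hD => hx D ⟨hD.1, h.trans hD.2⟩

lemma exists_finset_gammaSeq (n : ℕ) :
    ∀ x ∈ gammaSeq (Set.univ : Set B) n,
      ∃ S : Finset B, x ∈ gammaSeq (braceClosure (S : Set B)) n := by
  induction n with
  | zero =>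
    intro x _
    refine ⟨{x}, subset_braceClosure _ ?_⟩
    simp
  | succ n ih =>
    intro x hx
    classical
    have hx' : x ∈ AddSubgroup.closure
        ({y : B | ∃ a ∈ gammaSeq (Set.univ : Set B) n, ∃ b ∈ (Set.univ : Set B), y = sstar a b} ∪
         {y : B | ∃ b ∈ (Set.univ : Set B), ∃ a ∈ gammaSeq (Set.univ : Set B) n,
            y = b * a * b⁻¹ * a⁻¹} ∪
         {y : B | ∃ b ∈ (Set.univ : Set B), ∃ a ∈ gammaSeq (Set.univ : Set B) n,
            y = b + a + -b + -a}) := hx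
    clear hx
    induction hx' using AddSubgroup.closure_induction with
    | mem y hy =>
      rcases hy with (⟨a, ha, b, _, rfl⟩ | ⟨b, _, a, ha, rfl⟩) | ⟨b, _, a, ha, rfl⟩
      all_goals {
        obtain ⟨S, hS⟩ := ih a ha
        refine ⟨insert b S, ?_⟩
        have hb : b ∈ braceClosure ((insert b S : Finset B) : Set B) :=
          subset_braceClosure _ (by simp)
        have ha' : a ∈ gammaSeq (braceClosure ((insert b S : Finset B) : Set B)) n :=
          gammaSeq_mono (braceClosure_mono (by simp [Finset.coe_insert])) n hS
        show _ ∈ (AddSubgroup.closure _ : AddSubgroup B)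
        apply AddSubgroup.subset_closure
        first
          | exact Or.inl (Or.inl ⟨a, ha', b, hb, rfl⟩)
          | exact Or.inl (Or.inr ⟨b, hb, a, ha', rfl⟩)
          | exact Or.inr ⟨b, hb, a, ha', rfl⟩ }
    | zero =>
      refine ⟨∅, ?_⟩
      show (0 : B) ∈ (AddSubgroup.closure _ : AddSubgroup B)
      exact zero_mem _
    | add y z _ _ hy hz =>
      obtain ⟨S, hS⟩ := hy
      obtain ⟨T, hT⟩ := hz
      refine ⟨S ∪ T, ?_⟩
      have hS' : y ∈ gammaSeq (braceClosure ((S ∪ T : Finset B) : Set B)) (n + 1) :=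
        gammaSeq_mono (braceClosure_mono (by simp [Set.subset_def]; tauto)) (n + 1) hS
      have hT' : z ∈ gammaSeq (braceClosure ((S ∪ T : Finset B) : Set B)) (n + 1) :=
        gammaSeq_mono (braceClosure_mono (by simp [Set.subset_def]; tauto)) (n + 1) hT
      show (y + z : B) ∈ (AddSubgroup.closure _ : AddSubgroup B)
      exact add_mem hS' hT'
    | neg y _ hy =>
      obtain ⟨S, hS⟩ := hy
      refine ⟨S, ?_⟩
      show (-y : B) ∈ (AddSubgroup.closure _ : AddSubgroup B)
      exact neg_mem hS

/-- If every finitely generated sub-skew-brace of `B` is annihilator nilpotent of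
class `≤ k`, then `B` is annihilator nilpotent of class `≤ k`. -/
theorem locally_annihilator_nilpotent (k : ℕ)
    (hloc : ∀ S : Finset B, gammaSeq (braceClosure (S : Set B)) k = {0}) :
    gammaSeq (Set.univ : Set B) k = {0} := by
  apply Set.eq_of_subset_of_subset
  · intro x hx
    obtain ⟨S, hS⟩ := exists_finset_gammaSeq k x hx
    rw [hloc S] at hS
    exact hS
  · intro x hx
    rcases hx with rfl
    have h0 : (0 : B) ∈ gammaSeq (braceClosure ((∅ : Finset B) : Set B)) k := by
      rw [hloc ∅]; rfl
    exact gammaSeq_mono (Set.subset_univ _) k h0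


end SkewBrace
end
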